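/- Under the same hypotheses as Theorem 1 (tripartite no-signaling correlations with M inputs and d outcomes per party), the symmetric monogamy relation I_AB^{M,d} + (M-1)·I_AC^{M,d} ≥ M(d-1) holds. -/

import Mathlib

open Finset

noncomputable section

/-- Deterministic bracket `⟨x - y⟩`: the representative in `{0,…,d-1}` of `x - y` mod `d`. -/
def dval (d : ℕ) (x y : Fin d) : ℕ := (((x : ℕ) : ZMod d) - ((y : ℕ) : ZMod d)).val

/-- Shifted deterministic bracket `⟨x - y - 1⟩` mod `d`. -/
def dvalShift (d : ℕ) (x y : Fin d) : ℕ :=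
  (((x : ℕ) : ZMod d) - ((y : ℕ) : ZMod d) - 1).val

/-- The BKP Bell expression `I^{M,d}(p) = ∑_α (⟨A_α - B_α⟩ + ⟨B_α - A_{α+1}⟩)` of a bipartite
box `p(a,b|x,y)`, with the convention `A_{M+1} = A_1 + 1`. -/
def BKP (d M : ℕ) (hM : 0 < M) (p : Fin d → Fin d → Fin M → Fin M → ℝ) : ℝ :=
  ∑ α : Fin M,
    ((∑ a : Fin d, ∑ b : Fin d, (dval d a b : ℝ) * p a b α α) +
      if h : (α : ℕ) + 1 < M then
        ∑ a : Fin d, ∑ b : Fin d, (dval d b a : ℝ) * p a b ⟨(α : ℕ) + 1, h⟩ α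
      else
        ∑ a : Fin d, ∑ b : Fin d, (dvalShift d b a : ℝ) * p a b ⟨0, hM⟩ α)

/-- No-signaling conditions for a tripartite box `p(a,b,c|x,y,z)`. -/
def NoSignalingTri (d M : ℕ)
    (p : Fin d → Fin d → Fin d → Fin M → Fin M → Fin M → ℝ) : Prop :=
  (∀ b c x x' y z, ∑ a, p a b c x y z = ∑ a, p a b c x' y z) ∧
  (∀ a c x y y' z, ∑ b, p a b c x y z = ∑ b, p a b c x y' z) ∧
  (∀ a b x y z z', ∑ c, p a b c x y z = ∑ c, p a b c x y z')

namespace BKPMono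

lemma mod_two_cases (M n : ℕ) (h : n < 2 * M) :
    n % M = if n < M then n else n - M := by
  split_ifs with h1
  · exact Nat.mod_eq_of_lt h1
  · rw [Nat.mod_eq_sub_mod (by omega), Nat.mod_eq_of_lt (by omega)]

def wv (d : ℕ) (s : ℕ) (x y : Fin d) : ℕ :=
  (((x : ℕ) : ZMod d) - ((y : ℕ) : ZMod d) - (s : ZMod d)).val

lemma wv_zero (d : ℕ) (x y : Fin d) : wv d 0 x y = dval d x y := by
  simp [wv, dval]

lemma wv_one (d : ℕ) (x y : Fin d) : wv d 1 x y = dvalShift d x y := by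
  simp [wv, dvalShift]

lemma wv_triangle (d : ℕ) (s t : ℕ) (x y z : Fin d) :
    wv d (s + t) x z ≤ wv d s x y + wv d t y z := by
  have h : ((x:ℕ):ZMod d) - ((z:ℕ):ZMod d) - ((s+t : ℕ) : ZMod d)
      = (((x:ℕ):ZMod d) - ((y:ℕ):ZMod d) - (s:ZMod d))
        + (((y:ℕ):ZMod d) - ((z:ℕ):ZMod d) - (t:ZMod d)) := by push_cast; ring
  unfold wv
  rw [h]
  exact ZMod.val_add_le _ _

lemma wv_one_self (d : ℕ) (hd : 2 ≤ d) (b : Fin d) : wv d 1 b b = d - 1 := by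
  unfold wv
  have h : ((b:ℕ):ZMod d) - ((b:ℕ):ZMod d) - ((1:ℕ):ZMod d) = -1 := by push_cast; ring
  rw [h]
  obtain ⟨m, rfl⟩ : ∃ m, d = m + 1 := ⟨d-1, by omega⟩
  simpa using ZMod.val_neg_one m

def dpF (d : ℕ) (hne : (univ : Finset (Fin d)).Nonempty) (t : ℕ → ℕ) :
    ℕ → Fin d → Fin d → ℕ
  | 0, a, b => wv d 0 a b
  | k+1, a, b => univ.inf' hne fun c =>
      wv d 0 a c + univ.inf' hne fun a' => wv d (t k) c a' + dpF d hne t k a' b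

lemma dpF_ge (d : ℕ) (hne : (univ : Finset (Fin d)).Nonempty) (t : ℕ → ℕ) :
    ∀ k (a b : Fin d), wv d (∑ i ∈ range k, t i) a b ≤ dpF d hne t k a b := by
  intro k
  induction k with
  | zero => intro a b; simp [dpF]
  | succ k ih =>
    intro a b
    apply Finset.le_inf'
    intro c _
    have h1 : wv d (t k + ∑ i ∈ range k, t i) c b ≤
        univ.inf' hne fun a' => wv d (t k) c a' + dpF d hne t k a' b := by
      apply Finset.le_inf'
      intro a' _
      have h2 := wv_triangle d (t k) (∑ i ∈ range k, t i) c a' b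
      have h3 := ih a' b
      omega
    have h4 : ∑ i ∈ range (k+1), t i = 0 + (t k + ∑ i ∈ range k, t i) := by
      rw [Finset.sum_range_succ]; ring
    have h5 := wv_triangle d 0 (t k + ∑ i ∈ range k, t i) a c b
    rw [h4]
    omega

lemma dpF_final (d : ℕ) (hd : 2 ≤ d) (hne : (univ : Finset (Fin d)).Nonempty)
    (t : ℕ → ℕ) (s0 k : ℕ) (htot : s0 + ∑ i ∈ range k, t i = 1) (a b : Fin d) :
    (d - 1 : ℕ) ≤ wv d s0 b a + dpF d hne t k a b := by
  have h1 := dpF_ge d hne t k a b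
  have h2 := wv_triangle d s0 (∑ i ∈ range k, t i) b a b
  rw [htot, wv_one_self d hd b] at h2
  omega




def Xf (M : ℕ) (hM : 0 < M) (α : Fin M) (j : ℕ) : Fin M :=
  ⟨((α : ℕ) + j) % M, Nat.mod_lt _ hM⟩

def sfun (M : ℕ) (α : Fin M) (j : ℕ) : ℕ :=
  if ((α : ℕ) + j) % M = M - 1 then 1 else 0

lemma Xf_zero (M : ℕ) (hM : 0 < M) (α : Fin M) : Xf M hM α 0 = α := by
  apply Fin.ext; simp [Xf, Nat.mod_eq_of_lt α.isLt]

lemma Xf_M (M : ℕ) (hM : 0 < M) (α : Fin M) : Xf M hM α M = α := by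
  apply Fin.ext
  simp [Xf, Nat.add_mod_right, Nat.mod_eq_of_lt α.isLt]

lemma Xf_assoc (M : ℕ) (hM : 0 < M) (α : Fin M) (j : ℕ) :
    Xf M hM (Xf M hM α j) 1 = Xf M hM α (j + 1) := by
  apply Fin.ext
  show (((α : ℕ) + j) % M + 1) % M = ((α : ℕ) + j + 1) % M
  exact (Nat.mod_modEq ((α : ℕ) + j) M).add_right 1

lemma sfun_shift (M : ℕ) (hM : 0 < M) (α : Fin M) (j : ℕ) :
    sfun M (Xf M hM α j) 0 = sfun M α j := by
  simp [sfun, Xf]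

lemma sfun_indicator (M : ℕ) (α : Fin M) (j : ℕ) (hj : j < M) :
    sfun M α j = if j = M - 1 - (α : ℕ) then 1 else 0 := by
  have hα := α.isLt
  unfold sfun
  have h := mod_two_cases M ((α : ℕ) + j) (by omega)
  rw [h]
  split_ifs <;> omega

lemma sfun_total (M : ℕ) (hM : 0 < M) (α : Fin M) :
    ∑ j ∈ range M, sfun M α j = 1 := by
  have hα := α.isLt
  rw [Finset.sum_congr rfl fun j hj => sfun_indicator M α j (mem_range.mp hj)]
  rw [Finset.sum_ite_eq' (range M) (M - 1 - (α : ℕ)) (fun _ => 1)]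
  rw [if_pos (mem_range.mpr (by omega))]

lemma shift_sum (M : ℕ) (hM : 0 < M) (α : Fin M) :
    sfun M α 0 + ∑ k ∈ range (M - 1), sfun M α (M - 1 - k) = 1 := by
  have h1 : ∑ k ∈ range (M - 1), sfun M α (M - 1 - k) = ∑ j ∈ Ico 1 M, sfun M α j := by
    apply Finset.sum_nbij' (fun k => M - 1 - k) (fun j => M - 1 - j)
    · intro a ha; simp only [mem_range] at ha; simp only [mem_Ico]; omega
    · intro a ha; simp only [mem_Ico] at ha; simp only [mem_range]; omega
    · intro a ha; simp only [mem_range] at ha; omega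
    · intro a ha; simp only [mem_Ico] at ha; omega
    · intro a ha; rfl
  have h2 : ∑ j ∈ range M, sfun M α j = sfun M α 0 + ∑ j ∈ Ico 1 M, sfun M α j := by
    rw [Finset.range_eq_Ico, Finset.sum_eq_sum_Ico_succ_bot hM]
  have h3 := sfun_total M hM α
  omega

lemma sum_shift_reindex {β : Type*} [AddCommMonoid β] (M : ℕ) (hM : 0 < M) (α : Fin M)
    (f : Fin M → β) : ∑ γ : Fin M, f γ = ∑ j ∈ range M, f (Xf M hM α j) := by
  rw [← Fin.sum_univ_eq_sum_range (fun j => f (Xf M hM α j)) M]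
  symm
  apply Fintype.sum_bijective (fun j : Fin M => Xf M hM α (j : ℕ)) ?_ _ _ (fun j => rfl)
  rw [Finite.injective_iff_bijective.symm]
  intro i j hij
  have hiv : (((α : ℕ) + (i : ℕ)) % M) = (((α : ℕ) + (j : ℕ)) % M) := congrArg Fin.val hij
  have h1 := mod_two_cases M ((α : ℕ) + (i : ℕ)) (by have := α.isLt; have := i.isLt; omega)
  have h2 := mod_two_cases M ((α : ℕ) + (j : ℕ)) (by have := α.isLt; have := j.isLt; omega)
  rw [h1, h2] at hiv
  apply Fin.ext
  have := i.isLt; have := j.isLt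
  split_ifs at hiv <;> omega


lemma bkp_summand (d M : ℕ) (hM : 0 < M) (q : Fin d → Fin d → Fin M → Fin M → ℝ)
    (α : Fin M) :
    ((∑ a : Fin d, ∑ b : Fin d, (dval d a b : ℝ) * q a b α α) +
      if h : (α : ℕ) + 1 < M then
        ∑ a : Fin d, ∑ b : Fin d, (dval d b a : ℝ) * q a b ⟨(α : ℕ) + 1, h⟩ α
      else
        ∑ a : Fin d, ∑ b : Fin d, (dvalShift d b a : ℝ) * q a b ⟨0, hM⟩ α)
    = (∑ a : Fin d, ∑ b : Fin d, (wv d 0 a b : ℝ) * q a b α α) +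
      ∑ a : Fin d, ∑ b : Fin d, (wv d (sfun M α 0) b a : ℝ) * q a b (Xf M hM α 1) α := by
  have hα := α.isLt
  simp only [wv_zero]
  by_cases h : (α : ℕ) + 1 < M
  · rw [dif_pos h]
    have h1 : Xf M hM α 1 = ⟨(α:ℕ)+1, h⟩ := by
      apply Fin.ext; simp [Xf, Nat.mod_eq_of_lt h]
    have h2 : sfun M α 0 = 0 := by
      unfold sfun
      rw [if_neg (by rw [Nat.add_zero, Nat.mod_eq_of_lt hα]; omega)]
    rw [h1, h2]
    simp only [wv_zero]
  · rw [dif_neg h]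
    have h1 : Xf M hM α 1 = ⟨0, hM⟩ := by
      apply Fin.ext
      have : (α : ℕ) + 1 = M := by omega
      simp [Xf, this]
    have h2 : sfun M α 0 = 1 := by
      unfold sfun
      rw [if_pos (by rw [Nat.add_zero, Nat.mod_eq_of_lt hα]; omega)]
    rw [h1, h2]
    simp only [wv_one]

variable {d : ℕ}

lemma sum_marg_c (g : Fin d → Fin d → ℝ) (q : Fin d → Fin d → Fin d → ℝ) :
    ∑ a, ∑ b, ∑ c, g a b * q a b c = ∑ a, ∑ b, g a b * ∑ c, q a b c := by
  simp_rw [Finset.mul_sum]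

lemma sum_marg_b (g : Fin d → Fin d → ℝ) (q : Fin d → Fin d → Fin d → ℝ) :
    ∑ a, ∑ b, ∑ c, g a c * q a b c = ∑ a, ∑ c, g a c * ∑ b, q a b c := by
  simp_rw [Finset.mul_sum]
  exact Finset.sum_congr rfl fun a _ => Finset.sum_comm

lemma sum_marg_a (g : Fin d → Fin d → ℝ) (q : Fin d → Fin d → Fin d → ℝ) :
    ∑ a, ∑ b, ∑ c, g b c * q a b c = ∑ b, ∑ c, g b c * ∑ a, q a b c := by
  rw [Finset.sum_comm]
  simp_rw [Finset.mul_sum]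
  exact Finset.sum_congr rfl fun b _ => Finset.sum_comm



lemma sum3_mul_le {d : ℕ} (f g : Fin d → Fin d → Fin d → ℝ) (q : Fin d → Fin d → Fin d → ℝ)
    (hq : ∀ a b c, 0 ≤ q a b c) (h : ∀ a b c, f a b c ≤ g a b c) :
    ∑ a, ∑ b, ∑ c, f a b c * q a b c ≤ ∑ a, ∑ b, ∑ c, g a b c * q a b c := by
  refine Finset.sum_le_sum fun a _ => Finset.sum_le_sum fun b _ => Finset.sum_le_sum fun c _ => ?_
  exact mul_le_mul_of_nonneg_right (h a b c) (hq a b c)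

lemma chain_bound (d M : ℕ) (hd : 2 ≤ d) (hM : 2 ≤ M) (hM0 : 0 < M)
    (p : Fin d → Fin d → Fin d → Fin M → Fin M → Fin M → ℝ)
    (hpos : ∀ a b c x y z, 0 ≤ p a b c x y z)
    (hnorm : ∀ x y z, ∑ a, ∑ b, ∑ c, p a b c x y z = 1)
    (hnsA : ∀ b c x x' y z, ∑ a, p a b c x y z = ∑ a, p a b c x' y z)
    (hnsB : ∀ a c x y y' z, ∑ b, p a b c x y z = ∑ b, p a b c x y' z)
    (hnsC : ∀ a b x y z z', ∑ c, p a b c x y z = ∑ c, p a b c x y z')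
    (α : Fin M) (y0 z0 : Fin M) :
    (d : ℝ) - 1 ≤
      ((∑ a : Fin d, ∑ b : Fin d, (wv d 0 a b : ℝ) * ∑ c, p a b c α α z0) +
       ∑ a : Fin d, ∑ b : Fin d, (wv d (sfun M α 0) b a : ℝ) * ∑ c, p a b c (Xf M hM0 α 1) α z0)
      + ∑ j ∈ Ico 1 M,
        ((∑ a : Fin d, ∑ c : Fin d, (wv d 0 a c : ℝ) *
            ∑ b, p a b c (Xf M hM0 α j) y0 (Xf M hM0 α j)) +
         ∑ a : Fin d, ∑ c : Fin d, (wv d (sfun M α j) c a : ℝ) *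
            ∑ b, p a b c (Xf M hM0 α (j+1)) y0 (Xf M hM0 α j)) := by
  haveI : NeZero d := ⟨by omega⟩
  have hne : (univ : Finset (Fin d)).Nonempty := ⟨⟨0, by omega⟩, mem_univ _⟩
  set t : ℕ → ℕ := fun k => sfun M α (M - 1 - k) with ht
  -- key induction
  have key : ∀ k, k ≤ M - 1 →
      ∑ a, ∑ b, (dpF d hne t k a b : ℝ) * ∑ c, p a b c (Xf M hM0 α (M - k)) α α
      ≤ (∑ a : Fin d, ∑ b : Fin d, (wv d 0 a b : ℝ) * ∑ c, p a b c α α z0)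
        + ∑ j ∈ Ico (M - k) M,
          ((∑ a : Fin d, ∑ c : Fin d, (wv d 0 a c : ℝ) *
              ∑ b, p a b c (Xf M hM0 α j) y0 (Xf M hM0 α j)) +
           ∑ a : Fin d, ∑ c : Fin d, (wv d (sfun M α j) c a : ℝ) *
              ∑ b, p a b c (Xf M hM0 α (j+1)) y0 (Xf M hM0 α j)) := by
    intro k
    induction k with
    | zero =>
      intro _
      simp only [Nat.sub_zero, Xf_M M hM0 α, Finset.Ico_self, Finset.sum_empty, add_zero]
      apply le_of_eq
      refine Finset.sum_congr rfl fun a _ => Finset.sum_congr rfl fun b _ => ?_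
      rw [show dpF d hne t 0 a b = wv d 0 a b from rfl, hnsC a b α α α z0]
    | succ k ih =>
      intro hk1
      have ihh := ih (by omega)
      have hjM : M - 1 - k < M := by omega
      have hj1 : M - k = (M - 1 - k) + 1 := by omega
      rw [hj1] at ihh
      have hjk : M - (k+1) = M - 1 - k := by omega
      rw [hjk]
      set j := M - 1 - k with hj
      set X : ℕ → Fin M := fun i => Xf M hM0 α i with hX
      set G : Fin d → Fin d → ℕ := fun c b =>
        univ.inf' hne fun a' => wv d (t k) c a' + dpF d hne t k a' b with hG
      have htk : t k = sfun M α j := rfl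
      -- rewrite goal sum over Ico j M
      rw [Finset.sum_eq_sum_Ico_succ_bot hjM]
      -- chain of computations
      have e1 : ∑ a, ∑ b, (dpF d hne t (k+1) a b : ℝ) * ∑ c, p a b c (X j) α α
          = ∑ a, ∑ b, ∑ c, (dpF d hne t (k+1) a b : ℝ) * p a b c (X j) α (X j) := by
        rw [sum_marg_c (fun a b => (dpF d hne t (k+1) a b : ℝ)) (fun a b c => p a b c (X j) α (X j))]
        refine Finset.sum_congr rfl fun a _ => Finset.sum_congr rfl fun b _ => ?_
        rw [hnsC a b (X j) α α (X j)]
      have e2 : ∑ a, ∑ b, ∑ c, (dpF d hne t (k+1) a b : ℝ) * p a b c (X j) α (X j)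
          ≤ ∑ a, ∑ b, ∑ c, ((wv d 0 a c : ℝ) + (G c b : ℝ)) * p a b c (X j) α (X j) := by
        apply sum3_mul_le _ _ _ (fun a b c => hpos a b c _ _ _)
        intro a b c
        have h := Finset.inf'_le (fun c => wv d 0 a c + G c b) (mem_univ c)
        have h2 : dpF d hne t (k+1) a b ≤ wv d 0 a c + G c b := h
        calc (dpF d hne t (k+1) a b : ℝ) ≤ ((wv d 0 a c + G c b : ℕ) : ℝ) := by
              exact_mod_cast h2
          _ = (wv d 0 a c : ℝ) + (G c b : ℝ) := by push_cast; ring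
      have e3 : ∑ a, ∑ b, ∑ c, ((wv d 0 a c : ℝ) + (G c b : ℝ)) * p a b c (X j) α (X j)
          = (∑ a, ∑ b, ∑ c, (wv d 0 a c : ℝ) * p a b c (X j) α (X j))
            + ∑ a, ∑ b, ∑ c, (G c b : ℝ) * p a b c (X j) α (X j) := by
        simp_rw [add_mul, Finset.sum_add_distrib]
      have e4 : ∑ a, ∑ b, ∑ c, (wv d 0 a c : ℝ) * p a b c (X j) α (X j)
          = ∑ a, ∑ c, (wv d 0 a c : ℝ) * ∑ b, p a b c (X j) y0 (X j) := by
        rw [sum_marg_b (fun a c => (wv d 0 a c : ℝ)) (fun a b c => p a b c (X j) α (X j))]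
        refine Finset.sum_congr rfl fun a _ => Finset.sum_congr rfl fun c _ => ?_
        rw [hnsB a c (X j) α y0 (X j)]
      have e5 : ∑ a, ∑ b, ∑ c, (G c b : ℝ) * p a b c (X j) α (X j)
          = ∑ b, ∑ c, (G c b : ℝ) * ∑ a, p a b c (X (j+1)) α (X j) := by
        rw [sum_marg_a (fun b c => (G c b : ℝ)) (fun a b c => p a b c (X j) α (X j))]
        refine Finset.sum_congr rfl fun b _ => Finset.sum_congr rfl fun c _ => ?_
        rw [hnsA b c (X j) (X (j+1)) α (X j)]
      have e6 : ∑ b, ∑ c, (G c b : ℝ) * ∑ a, p a b c (X (j+1)) α (X j)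
          = ∑ a, ∑ b, ∑ c, (G c b : ℝ) * p a b c (X (j+1)) α (X j) := by
        rw [sum_marg_a (fun b c => (G c b : ℝ)) (fun a b c => p a b c (X (j+1)) α (X j))]
      have e7 : ∑ a, ∑ b, ∑ c, (G c b : ℝ) * p a b c (X (j+1)) α (X j)
          ≤ ∑ a, ∑ b, ∑ c, ((wv d (sfun M α j) c a : ℝ) + (dpF d hne t k a b : ℝ))
              * p a b c (X (j+1)) α (X j) := by
        apply sum3_mul_le _ _ _ (fun a b c => hpos a b c _ _ _)
        intro a b c
        have h := Finset.inf'_le (fun a' => wv d (t k) c a' + dpF d hne t k a' b) (mem_univ a)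
        have h2 : G c b ≤ wv d (t k) c a + dpF d hne t k a b := h
        rw [htk] at h2
        calc (G c b : ℝ) ≤ ((wv d (sfun M α j) c a + dpF d hne t k a b : ℕ) : ℝ) := by
              exact_mod_cast h2
          _ = _ := by push_cast; ring
      have e8 : ∑ a, ∑ b, ∑ c, ((wv d (sfun M α j) c a : ℝ) + (dpF d hne t k a b : ℝ))
              * p a b c (X (j+1)) α (X j)
          = (∑ a, ∑ b, ∑ c, (wv d (sfun M α j) c a : ℝ) * p a b c (X (j+1)) α (X j))
            + ∑ a, ∑ b, ∑ c, (dpF d hne t k a b : ℝ) * p a b c (X (j+1)) α (X j) := by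
        simp_rw [add_mul, Finset.sum_add_distrib]
      have e9 : ∑ a, ∑ b, ∑ c, (wv d (sfun M α j) c a : ℝ) * p a b c (X (j+1)) α (X j)
          = ∑ a, ∑ c, (wv d (sfun M α j) c a : ℝ) * ∑ b, p a b c (X (j+1)) y0 (X j) := by
        rw [sum_marg_b (fun a c => (wv d (sfun M α j) c a : ℝ))
          (fun a b c => p a b c (X (j+1)) α (X j))]
        refine Finset.sum_congr rfl fun a _ => Finset.sum_congr rfl fun c _ => ?_
        rw [hnsB a c (X (j+1)) α y0 (X j)]
      have e10 : ∑ a, ∑ b, ∑ c, (dpF d hne t k a b : ℝ) * p a b c (X (j+1)) α (X j)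
          = ∑ a, ∑ b, (dpF d hne t k a b : ℝ) * ∑ c, p a b c (X (j+1)) α α := by
        rw [sum_marg_c (fun a b => (dpF d hne t k a b : ℝ))
          (fun a b c => p a b c (X (j+1)) α (X j))]
        refine Finset.sum_congr rfl fun a _ => Finset.sum_congr rfl fun b _ => ?_
        rw [hnsC a b (X (j+1)) α (X j) α]
      calc ∑ a, ∑ b, (dpF d hne t (k+1) a b : ℝ) * ∑ c, p a b c (X j) α α
          ≤ (∑ a, ∑ c, (wv d 0 a c : ℝ) * ∑ b, p a b c (X j) y0 (X j))
            + ((∑ a, ∑ c, (wv d (sfun M α j) c a : ℝ) * ∑ b, p a b c (X (j+1)) y0 (X j))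
              + ∑ a, ∑ b, (dpF d hne t k a b : ℝ) * ∑ c, p a b c (X (j+1)) α α) := by
            rw [e1]
            calc ∑ a, ∑ b, ∑ c, (dpF d hne t (k+1) a b : ℝ) * p a b c (X j) α (X j)
                ≤ _ := e2
              _ = _ := e3
              _ ≤ _ := by
                  rw [e4, e5, e6]
                  apply add_le_add_right
                  calc ∑ a, ∑ b, ∑ c, (G c b : ℝ) * p a b c (X (j+1)) α (X j)
                      ≤ _ := e7
                    _ = _ := e8
                    _ = _ := by rw [e9, e10]
        _ ≤ _ := by
            have := add_le_add_left ihh ((∑ a, ∑ c, (wv d 0 a c : ℝ) * ∑ b, p a b c (X j) y0 (X j))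
              + ∑ a, ∑ c, (wv d (sfun M α j) c a : ℝ) * ∑ b, p a b c (X (j+1)) y0 (X j))
            linarith
  -- finish
  have hfin : M - (M - 1) = 1 := by omega
  have hkey := key (M - 1) le_rfl
  rw [hfin] at hkey
  -- second AB term
  have t1eq : ∑ a : Fin d, ∑ b : Fin d, (wv d (sfun M α 0) b a : ℝ) * ∑ c, p a b c (Xf M hM0 α 1) α z0
      = ∑ a, ∑ b, (wv d (sfun M α 0) b a : ℝ) * ∑ c, p a b c (Xf M hM0 α 1) α α := by
    refine Finset.sum_congr rfl fun a _ => Finset.sum_congr rfl fun b _ => ?_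
    rw [hnsC a b (Xf M hM0 α 1) α z0 α]
  have pointw : ∀ a b : Fin d, ((d : ℝ) - 1) ≤
      (wv d (sfun M α 0) b a : ℝ) + (dpF d hne t (M-1) a b : ℝ) := by
    intro a b
    have h := dpF_final d hd hne t (sfun M α 0) (M-1) (shift_sum M hM0 α) a b
    have : ((d - 1 : ℕ) : ℝ) ≤ ((wv d (sfun M α 0) b a + dpF d hne t (M-1) a b : ℕ) : ℝ) := by
      exact_mod_cast h
    push_cast at this
    rw [Nat.cast_sub (by omega)] at this
    push_cast at this
    linarith
  have hlow : (d : ℝ) - 1 ≤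
      ∑ a, ∑ b, ((wv d (sfun M α 0) b a : ℝ) + (dpF d hne t (M-1) a b : ℝ))
        * ∑ c, p a b c (Xf M hM0 α 1) α α := by
    have hnn : ∀ a b : Fin d, 0 ≤ ∑ c, p a b c (Xf M hM0 α 1) α α :=
      fun a b => Finset.sum_nonneg fun c _ => hpos a b c _ _ _
    calc (d : ℝ) - 1 = ((d : ℝ) - 1) * ∑ a, ∑ b, ∑ c, p a b c (Xf M hM0 α 1) α α := by
          rw [hnorm (Xf M hM0 α 1) α α]; ring
      _ = ∑ a, ∑ b, ((d:ℝ) - 1) * ∑ c, p a b c (Xf M hM0 α 1) α α := by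
          simp_rw [Finset.mul_sum]
      _ ≤ _ := by
          refine Finset.sum_le_sum fun a _ => Finset.sum_le_sum fun b _ => ?_
          exact mul_le_mul_of_nonneg_right (pointw a b) (hnn a b)
  have hsplit : ∑ a, ∑ b, ((wv d (sfun M α 0) b a : ℝ) + (dpF d hne t (M-1) a b : ℝ))
        * ∑ c, p a b c (Xf M hM0 α 1) α α
      = (∑ a, ∑ b, (wv d (sfun M α 0) b a : ℝ) * ∑ c, p a b c (Xf M hM0 α 1) α α)
        + ∑ a, ∑ b, (dpF d hne t (M-1) a b : ℝ) * ∑ c, p a b c (Xf M hM0 α 1) α α := by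
    simp_rw [add_mul, Finset.sum_add_distrib]
  rw [t1eq]
  have hXf1 : Xf M hM0 α (M - (M-1)) = Xf M hM0 α 1 := by rw [hfin]
  calc (d : ℝ) - 1 ≤ _ := hlow
    _ = _ := hsplit
    _ ≤ _ := by
        have := add_le_add_left hkey
          (∑ a, ∑ b, (wv d (sfun M α 0) b a : ℝ) * ∑ c, p a b c (Xf M hM0 α 1) α α)
        linarith


end BKPMono

open BKPMono in
/-- Theorem 1, inequality (19): tight monogamy relation
`I_AB^{M,d} + (M-1)·I_AC^{M,d} ≥ M(d-1)` for tripartite no-signaling correlations. -/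
theorem bkp_monogamy_right (d M : ℕ) (hd : 2 ≤ d) (hM : 2 ≤ M)
    (p : Fin d → Fin d → Fin d → Fin M → Fin M → Fin M → ℝ)
    (hpos : ∀ a b c x y z, 0 ≤ p a b c x y z)
    (hnorm : ∀ x y z, ∑ a, ∑ b, ∑ c, p a b c x y z = 1)
    (hns : NoSignalingTri d M p) :
    (M : ℝ) * ((d : ℝ) - 1) ≤
      BKP d M (by omega) (fun a b x y => ∑ c, p a b c x y ⟨0, by omega⟩)
        + ((M : ℝ) - 1) *
          BKP d M (by omega) (fun a c x z => ∑ b, p a b c x ⟨0, by omega⟩ z) := by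
  have hM0 : 0 < M := by omega
  obtain ⟨hnsA, hnsB, hnsC⟩ := hns
  have hBKP : ∀ (q : Fin d → Fin d → Fin M → Fin M → ℝ) (h : 0 < M),
      BKP d M h q = ∑ α : Fin M,
        ((∑ a : Fin d, ∑ b : Fin d, (wv d 0 a b : ℝ) * q a b α α) +
         ∑ a : Fin d, ∑ b : Fin d, (wv d (sfun M α 0) b a : ℝ) * q a b (Xf M hM0 α 1) α) := by
    intro q h
    unfold BKP
    refine Finset.sum_congr rfl fun α _ => ?_
    have := bkp_summand d M h q α
    rw [this]
  rw [hBKP _ (by omega), hBKP _ (by omega)]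
  -- name the two summand families
  set ABt : Fin M → ℝ := fun α =>
    (∑ a : Fin d, ∑ b : Fin d, (wv d 0 a b : ℝ) * ∑ c, p a b c α α ⟨0, hM0⟩) +
    ∑ a : Fin d, ∑ b : Fin d, (wv d (sfun M α 0) b a : ℝ) *
      ∑ c, p a b c (Xf M hM0 α 1) α ⟨0, hM0⟩ with hABt
  set ACt : Fin M → ℝ := fun β =>
    (∑ a : Fin d, ∑ c : Fin d, (wv d 0 a c : ℝ) * ∑ b, p a b c β ⟨0, hM0⟩ β) +
    ∑ a : Fin d, ∑ c : Fin d, (wv d (sfun M β 0) c a : ℝ) *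
      ∑ b, p a b c (Xf M hM0 β 1) ⟨0, hM0⟩ β with hACt
  -- main bound
  have hchain : ∀ α : Fin M, (d : ℝ) - 1 ≤ ABt α + ∑ j ∈ Ico 1 M, ACt (Xf M hM0 α j) := by
    intro α
    have hb := chain_bound d M hd hM hM0 p hpos hnorm hnsA hnsB hnsC α ⟨0, hM0⟩ ⟨0, hM0⟩
    have heq : ∑ j ∈ Ico 1 M, ACt (Xf M hM0 α j)
        = ∑ j ∈ Ico 1 M,
          ((∑ a : Fin d, ∑ c : Fin d, (wv d 0 a c : ℝ) *
              ∑ b, p a b c (Xf M hM0 α j) ⟨0, hM0⟩ (Xf M hM0 α j)) +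
           ∑ a : Fin d, ∑ c : Fin d, (wv d (sfun M α j) c a : ℝ) *
              ∑ b, p a b c (Xf M hM0 α (j+1)) ⟨0, hM0⟩ (Xf M hM0 α j)) := by
      refine Finset.sum_congr rfl fun j _ => ?_
      rw [hACt]
      simp only []
      rw [sfun_shift M hM0 α j, Xf_assoc M hM0 α j]
    rw [heq]
    exact hb
  have hsum : ∀ α : Fin M, ∑ j ∈ Ico 1 M, ACt (Xf M hM0 α j)
      = (∑ β : Fin M, ACt β) - ACt α := by
    intro α
    have h1 := sum_shift_reindex M hM0 α ACt
    rw [Finset.range_eq_Ico, Finset.sum_eq_sum_Ico_succ_bot hM0, Xf_zero M hM0 α] at h1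
    linarith
  have htot : ∀ α : Fin M, (d : ℝ) - 1 ≤ ABt α + ((∑ β : Fin M, ACt β) - ACt α) := by
    intro α
    have := hchain α
    rw [hsum α] at this
    exact this
  have hfinal := Finset.sum_le_sum fun α (_ : α ∈ (univ : Finset (Fin M))) => htot α
  rw [Finset.sum_const, card_univ, Fintype.card_fin] at hfinal
  rw [Finset.sum_add_distrib, Finset.sum_sub_distrib, Finset.sum_const, card_univ,
    Fintype.card_fin] at hfinal
  rw [nsmul_eq_mul, nsmul_eq_mul] at hfinal
  linarith
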